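/- For all x, y in V, one has (1/2)(Ω(x) + Ω(y) + sqrt((Ω(x) − Ω(y))² + K(x,y))) ≤ Ω(x) + Ω(y), where K(x,y) := max(‖⟨x, y⟩‖_A, ‖θ_{x,y}‖) and θ_{x,y} : V → V is the bounded linear operator θ_{x,y}(z) = x⟨y, z⟩. -/

import Mathlib

/-!
Setting: `A` is a C*-algebra and `V` is a Hilbert C*-module over `A`.
`WithCStarModule Aᵐᵒᵖ (A × V)` is the Hilbert `A`-module `A ⊕ V`, with inner product
`⟪(a, y), (b, z)⟫ = a * b + ⟪y, z⟫` and norm `‖(a, y)‖ = ‖a * a + ⟪y, y⟫‖ ^ (1/2)`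
(both provided by Mathlib).  For `x : V` and `lam : ℂ` with `|lam| = 1`, the operator
`M_{x,lam} : A ⊕ V → A ⊕ V`, `(a, y) ↦ (conj lam • ⟪x, y⟫, lam • (x <• a))` is encoded
by a family `M` of continuous linear maps satisfying the predicate `IsM` below, and the
numerical radius is `numRadius M x = (1/2) * sup_{|lam| = 1} ‖M x lam‖`.
-/

open scoped RightActions InnerProductSpace

noncomputable section

/-- The Hilbert C⋆-module class as it stood in the older Mathlib: a right `A`-module
(`SMul Aᵐᵒᵖ E`) with `⟪x, y <• a⟫ = ⟪x, y⟫ * a`. -/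
class CStarModuleOld (A : outParam <| Type*) (E : Type*) [NonUnitalSemiring A] [StarRing A] [Module ℂ A]
    [AddCommGroup E] [Module ℂ E] [PartialOrder A] [SMul Aᵐᵒᵖ E] [Norm A] [Norm E]
    extends Inner A E where
  inner_add_right {x} {y} {z} : inner x (y + z) = inner x y + inner x z
  inner_self_nonneg {x} : 0 ≤ inner x x
  inner_self {x} : inner x x = 0 ↔ x = 0
  inner_op_smul_right {a : A} {x y : E} : inner x (y <• a) = inner x y * a
  inner_smul_right_complex {z : ℂ} {x} {y} : inner x (z • y) = z • inner x y
  star_inner x y : star (inner x y) = inner y x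
  norm_eq_sqrt_norm_inner_self x : ‖x‖ = √‖inner x x‖

/-- The older Mathlib's C⋆-algebra as a C⋆-module over itself: `⟪x, y⟫ = star x * y`. -/
instance CStarModuleOld.instSelf {A : Type*} [NonUnitalCStarAlgebra A] [PartialOrder A]
    [StarOrderedRing A] : CStarModuleOld A A where
  inner x y := star x * y
  inner_add_right := mul_add ..
  inner_self_nonneg := star_mul_self_nonneg _
  inner_self := CStarRing.star_mul_self_eq_zero_iff _
  inner_op_smul_right := by
    intro a x y
    simp [MulOpposite.smul_eq_mul_unop, mul_assoc]
  inner_smul_right_complex := mul_smul_comm ..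
  star_inner x y := by simp
  norm_eq_sqrt_norm_inner_self x := by
    rw [CStarRing.norm_star_mul_self, Real.sqrt_mul_self (norm_nonneg _)]

/-- An old-style (right) C⋆-module over `A` is a current-style C⋆-module over `Aᵐᵒᵖ`,
with inner product `op ⟪x, y⟫`. -/
instance CStarModuleOld.toCStarModuleOp {A E : Type*} [NonUnitalCStarAlgebra A]
    [PartialOrder A] [NormedAddCommGroup E] [Module ℂ E] [SMul Aᵐᵒᵖ E]
    [CStarModuleOld A E] : CStarModule Aᵐᵒᵖ E where
  inner x y := MulOpposite.op (inner A x y)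
  inner_add_right := by
    intro x y z
    rw [CStarModuleOld.inner_add_right, MulOpposite.op_add]
  inner_self_nonneg := by
    intro x
    exact CStarModuleOld.inner_self_nonneg (A := A) (x := x)
  inner_self := by
    intro x
    rw [MulOpposite.op_eq_zero_iff]
    exact CStarModuleOld.inner_self
  inner_op_smul_right := by
    intro a x y
    have h := CStarModuleOld.inner_op_smul_right (A := A) (a := MulOpposite.unop a) (x := x) (y := y)
    simp only [MulOpposite.op_unop] at h
    rw [h, MulOpposite.op_mul, MulOpposite.op_unop]
  inner_smul_right_complex := by
    intro z x y
    rw [CStarModuleOld.inner_smul_right_complex, MulOpposite.op_smul]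
  star_inner x y := by
    rw [← MulOpposite.op_star, CStarModuleOld.star_inner]
  norm_eq_sqrt_norm_inner_self x := CStarModuleOld.norm_eq_sqrt_norm_inner_self (A := A) x

variable {A V : Type*} [NonUnitalCStarAlgebra A] [PartialOrder A] [StarOrderedRing A]
  [NormedAddCommGroup V] [NormedSpace ℂ V] [SMul Aᵐᵒᵖ V] [CStarModuleOld A V] [CompleteSpace V]

/-- The element of the Hilbert `A`-module `A ⊕ V` with components `a : A` and `y : V`. -/
def pairElem (a : A) (y : V) : WithCStarModule Aᵐᵒᵖ (A × V) :=
  (WithCStarModule.equiv Aᵐᵒᵖ (A × V)).symm (a, y)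

/-- `IsM M` asserts that for every `x : V` and every unimodular `lam : ℂ`, the continuous
linear map `M x lam` is the operator `M_{x,lam} : (a, y) ↦ (conj lam • ⟪x, y⟫, lam • (x <• a))`
on `A ⊕ V`. -/
def IsM (M : V → ℂ → (WithCStarModule Aᵐᵒᵖ (A × V) →L[ℂ] WithCStarModule Aᵐᵒᵖ (A × V))) : Prop :=
  ∀ (x : V) (lam : ℂ), ‖lam‖ = 1 → ∀ (a : A) (y : V),
    M x lam (pairElem a y) = pairElem ((starRingEnd ℂ) lam • ⟪x, y⟫_A) (lam • (x <• a))

/-- The numerical radius `Ω(x) = (1/2) * sup_{|lam| = 1} ‖M_{x,lam}‖`. -/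
def numRadius (M : V → ℂ → (WithCStarModule Aᵐᵒᵖ (A × V) →L[ℂ] WithCStarModule Aᵐᵒᵖ (A × V)))
    (x : V) : ℝ :=
  (1 / 2) * sSup ((fun lam : ℂ => ‖M x lam‖) '' {lam : ℂ | ‖lam‖ = 1})

/-- `IsTheta Θ` asserts that for all `x y : V`, the continuous linear map `Θ x y` is the
"compact" operator `θ_{x,y} : V → V`, `z ↦ x <• ⟪y, z⟫`. -/
def IsTheta (Θ : V → V → (V →L[ℂ] V)) : Prop :=
  ∀ (x y z : V), Θ x y z = x <• ⟪y, z⟫_A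

/-!
Testing `M_{x,1}` on `(0, x)` gives `‖x‖² = ‖⟪x, x⟫‖ ≤ ‖M_{x,1}‖ ‖x‖`, so `‖x‖ ≤ 2 Ω(x)`; here the
supremum defining `Ω(x)` is a genuine one because `‖M_{x,λ}‖ ≤ 2 ‖x‖`. Both `‖⟪x, y⟫‖` and
`‖θ_{x,y}‖` are at most `‖x‖ ‖y‖ ≤ 4 Ω(x) Ω(y)`, hence `(Ω(x) - Ω(y))² + K(x,y) ≤ (Ω(x) + Ω(y))²`.
-/

lemma CStarModule.norm_smul_le {A E : Type*} [NonUnitalCStarAlgebra A] [PartialOrder A]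
    [AddCommGroup E] [Module ℂ E] [SMul A E] [Norm E] [CStarModule A E] (a : A) (x : E) :
    ‖a • x‖ ≤ ‖a‖ * ‖x‖ := by
  have hsq : ‖a • x‖ ^ 2 ≤ (‖a‖ * ‖x‖) ^ 2 :=
    calc ‖a • x‖ ^ 2 = ‖a * inner A x x * star a‖ := by
          rw [CStarModule.norm_sq_eq A, CStarModule.inner_op_smul_left,
            CStarModule.inner_op_smul_right]
      _ ≤ ‖a‖ * ‖inner A x x‖ * ‖star a‖ :=
          (norm_mul_le _ _).trans (by gcongr; exact norm_mul_le _ _)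
      _ = (‖a‖ * ‖x‖) ^ 2 := by rw [norm_star, ← CStarModule.norm_sq_eq A]; ring
  exact (pow_le_pow_iff_left₀ (CStarModule.norm_nonneg A)
    (mul_nonneg (norm_nonneg a) (CStarModule.norm_nonneg A)) two_ne_zero).mp hsq

section

variable {A E F : Type*} [NonUnitalCStarAlgebra A] [PartialOrder A] [StarOrderedRing A]
  [NormedAddCommGroup E] [Module ℂ E] [SMul A E] [CStarModule A E]
  [NormedAddCommGroup F] [Module ℂ F] [SMul A F] [CStarModule A F]

lemma WithCStarModule.norm_fst_le (x : WithCStarModule A (E × F)) : ‖x.1‖ ≤ ‖x‖ :=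
  (le_max_left _ _).trans (max_le_prod_norm x)

lemma WithCStarModule.norm_snd_le (x : WithCStarModule A (E × F)) : ‖x.2‖ ≤ ‖x‖ :=
  (le_max_right _ _).trans (max_le_prod_norm x)

end

lemma half_mul_add_add_sqrt_le {a b K : ℝ} (ha : 0 ≤ a) (hb : 0 ≤ b) (hK : K ≤ 4 * a * b) :
    1 / 2 * (a + b + √((a - b) ^ 2 + K)) ≤ a + b := by
  have : √((a - b) ^ 2 + K) ≤ a + b :=
    Real.sqrt_le_iff.mpr ⟨by positivity, by nlinarith⟩
  linarith

section

variable {A V : Type*} [NonUnitalCStarAlgebra A] [PartialOrder A] [NormedAddCommGroup V]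
  [NormedSpace ℂ V] [SMul Aᵐᵒᵖ V] [CStarModuleOld A V]

lemma CStarModuleOld.norm_op_smul_le (x : V) (a : A) : ‖x <• a‖ ≤ ‖x‖ * ‖a‖ := by
  rw [mul_comm, ← MulOpposite.norm_op a]
  exact CStarModule.norm_smul_le (MulOpposite.op a) x

lemma CStarModuleOld.norm_sq_eq (x : V) : ‖x‖ ^ 2 = ‖⟪x, x⟫_A‖ :=
  CStarModule.norm_sq_eq Aᵐᵒᵖ (x := x)

variable [StarOrderedRing A]

lemma CStarModuleOld.norm_inner_le (x y : V) : ‖⟪x, y⟫_A‖ ≤ ‖x‖ * ‖y‖ :=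
  CStarModule.norm_inner_le (A := Aᵐᵒᵖ) V

lemma IsTheta.opNorm_le {Θ : V → V → (V →L[ℂ] V)} (hΘ : IsTheta Θ) (x y : V) :
    ‖Θ x y‖ ≤ ‖x‖ * ‖y‖ := by
  refine ContinuousLinearMap.opNorm_le_bound _ (by positivity) fun z => ?_
  calc ‖Θ x y z‖ = ‖x <• ⟪y, z⟫_A‖ := by rw [hΘ]
    _ ≤ ‖x‖ * (‖y‖ * ‖z‖) := by
        grw [CStarModuleOld.norm_op_smul_le, CStarModuleOld.norm_inner_le]
    _ = ‖x‖ * ‖y‖ * ‖z‖ := by ring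

variable {M : V → ℂ → (WithCStarModule Aᵐᵒᵖ (A × V) →L[ℂ] WithCStarModule Aᵐᵒᵖ (A × V))}

lemma IsM.opNorm_le (hM : IsM M) (x : V) {lam : ℂ} (hlam : ‖lam‖ = 1) :
    ‖M x lam‖ ≤ 2 * ‖x‖ := by
  refine ContinuousLinearMap.opNorm_le_bound _ (by positivity) fun u => ?_
  calc ‖M x lam u‖
      = ‖pairElem ((starRingEnd ℂ) lam • ⟪x, u.2⟫_A) (lam • (x <• u.1))‖ := by
        rw [← hM x lam hlam]; rfl
    _ ≤ ‖(starRingEnd ℂ) lam • ⟪x, u.2⟫_A‖ + ‖lam • (x <• u.1)‖ :=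
        WithCStarModule.prod_norm_le_norm_add _
    _ = ‖⟪x, u.2⟫_A‖ + ‖x <• u.1‖ := by
        rw [norm_smul, norm_smul, RCLike.norm_conj, hlam, one_mul, one_mul]
    _ ≤ ‖x‖ * ‖u.2‖ + ‖x‖ * ‖u.1‖ :=
        add_le_add (CStarModuleOld.norm_inner_le _ _) (CStarModuleOld.norm_op_smul_le _ _)
    _ ≤ ‖x‖ * ‖u‖ + ‖x‖ * ‖u‖ := by
        gcongr
        exacts [WithCStarModule.norm_snd_le u, WithCStarModule.norm_fst_le u]
    _ = 2 * ‖x‖ * ‖u‖ := by ring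

lemma IsM.norm_le_opNorm_one (hM : IsM M) (x : V) : ‖x‖ ≤ ‖M x 1‖ := by
  have key : ‖x‖ ^ 2 ≤ ‖M x 1‖ * ‖x‖ :=
    calc ‖x‖ ^ 2 = ‖(starRingEnd ℂ) 1 • ⟪x, x⟫_A‖ := by
          rw [map_one, one_smul, CStarModuleOld.norm_sq_eq]
      _ ≤ ‖M x 1 (pairElem 0 x)‖ := by
          rw [hM x 1 norm_one]
          exact WithCStarModule.norm_fst_le (pairElem _ _)
      _ ≤ ‖M x 1‖ * ‖pairElem (0 : A) x‖ := (M x 1).le_opNorm _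
      _ ≤ ‖M x 1‖ * ‖x‖ := by
          gcongr
          simpa [pairElem] using WithCStarModule.prod_norm_le_norm_add (pairElem (0 : A) x)
  rcases (norm_nonneg x).eq_or_lt with hx | hx
  · rw [← hx]; exact (M x 1).opNorm_nonneg
  · exact le_of_mul_le_mul_right (by rwa [sq] at key) hx

lemma IsM.norm_le_two_mul_numRadius (hM : IsM M) (x : V) : ‖x‖ ≤ 2 * numRadius M x := by
  have hbdd : BddAbove ((fun lam : ℂ => ‖M x lam‖) '' {lam : ℂ | ‖lam‖ = 1}) :=
    ⟨2 * ‖x‖, by rintro _ ⟨lam, hlam, rfl⟩; exact hM.opNorm_le x hlam⟩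
  have hle : ‖M x 1‖ ≤ sSup ((fun lam : ℂ => ‖M x lam‖) '' {lam : ℂ | ‖lam‖ = 1}) :=
    le_csSup hbdd ⟨1, norm_one, rfl⟩
  rw [numRadius]
  linarith [hM.norm_le_opNorm_one x]

end

theorem stmt15 (M : V → ℂ → (WithCStarModule Aᵐᵒᵖ (A × V) →L[ℂ] WithCStarModule Aᵐᵒᵖ (A × V))) (hM : IsM M) (Θ : V → V → (V →L[ℂ] V)) (hΘ : IsTheta Θ) (x y : V) :
    (1 / 2) * (numRadius M x + numRadius M y +
      Real.sqrt ((numRadius M x - numRadius M y) ^ 2 + max ‖⟪x, y⟫_A‖ ‖Θ x y‖)) ≤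
      numRadius M x + numRadius M y := by
  have hx := hM.norm_le_two_mul_numRadius x
  have hy := hM.norm_le_two_mul_numRadius y
  have hxy : ‖x‖ * ‖y‖ ≤ 4 * numRadius M x * numRadius M y := by
    nlinarith [norm_nonneg x, norm_nonneg y]
  refine half_mul_add_add_sqrt_le (by linarith [norm_nonneg x]) (by linarith [norm_nonneg y]) ?_
  exact max_le ((CStarModuleOld.norm_inner_le x y).trans hxy) ((hΘ.opNorm_le x y).trans hxy)
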